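/- Let E be a directed graph. Every admissible pair of E is reflexive if and only if the following three conditions hold: (a) each cycle of E is either without exits or extreme; (b) each infinite emitter of E lies on a cycle; (c) for every infinite path α of E, only finitely many edges e with s(e) ∈ α⁰ satisfy r(e) ∉ R(α⁰). (This is the combinatorial content of the theorem that each graded ideal of the Leavitt path algebra L_K(E) is an annihilator ideal if and only if (a), (b), (c) hold.) -/

import Mathlib

namespace GraphAnn

variable {V E : Type*}

/-- `u ≥ v`: there is a (possibly trivial) path from `u` to `v`. -/
def Reach (s r : E → V) : V → V → Prop :=
  Relation.ReflTransGen (fun a b => ∃ e, s e = a ∧ r e = b)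

/-- The root `R(W)` of a set of vertices. -/
def Root (s r : E → V) (W : Set V) : Set V :=
  {u | ∃ v ∈ W, Reach s r u v}

def Hereditary (s r : E → V) (H : Set V) : Prop :=
  ∀ u v, u ∈ H → Reach s r u v → v ∈ H

def IsSink (s : E → V) (v : V) : Prop := ∀ e : E, s e ≠ v

def IsInfiniteEmitter (s : E → V) (v : V) : Prop := {e : E | s e = v}.Infinite

def IsRegular (s : E → V) (v : V) : Prop := ¬ IsSink s v ∧ ¬ IsInfiniteEmitter s v

def Saturated (s r : E → V) (H : Set V) : Prop :=
  ∀ v, IsRegular s v → (∀ e : E, s e = v → r e ∈ H) → v ∈ H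

/-- `V⊥ = E⁰ − R(V)`. -/
def perp (s r : E → V) (W : Set V) : Set V := {v | v ∉ Root s r W}

/-- Breaking vertices `B_H`. -/
def Breaking (s r : E → V) (H : Set V) : Set V :=
  {v | v ∉ H ∧ IsInfiniteEmitter s v ∧
    {e : E | s e = v ∧ r e ∉ H}.Nonempty ∧ {e : E | s e = v ∧ r e ∉ H}.Finite}

/-- `(H,S)` is an admissible pair. -/
def Admissible (s r : E → V) (H S : Set V) : Prop :=
  Hereditary s r H ∧ Saturated s r H ∧ S ⊆ Breaking s r H

/-- `S⊥ = B_{H⊥} − S`. -/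
def Sperp (s r : E → V) (H S : Set V) : Set V := Breaking s r (perp s r H) \ S

/-- A cycle: a closed path of positive length in which distinct edges have
distinct sources. -/
structure GCycle (s r : E → V) where
  edges : List E
  ne : edges ≠ []
  chain : edges.Chain' (fun e f => r e = s f)
  closed : r (edges.getLast ne) = s (edges.head ne)
  srcNodup : (edges.map s).Nodup

/-- The vertex set `c⁰` of a cycle. -/
def GCycle.verts {s r : E → V} (c : GCycle s r) : Set V :=
  {v | ∃ e ∈ c.edges, s e = v}

/-- A cycle has an exit. -/
def GCycle.HasExit {s r : E → V} (c : GCycle s r) : Prop :=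
  ∃ e, s e ∈ c.verts ∧ e ∉ c.edges

/-- An extreme cycle: it has an exit and every exit returns. -/
def GCycle.Extreme {s r : E → V} (c : GCycle s r) : Prop :=
  c.HasExit ∧ ∀ v ∈ c.verts, ∀ w, Reach s r v w → ∃ u ∈ c.verts, Reach s r w u

/-- The vertex set `α⁰` of an infinite path `α`. -/
def InfPathVerts (s : E → V) (α : ℕ → E) : Set V := {v | ∃ n, s (α n) = v}

/-- Conditions (a), (b), (c): the graph is all-reflexive. -/
def AllReflexiveGraph (s r : E → V) : Prop :=
  (∀ c : GCycle s r, ¬ c.HasExit ∨ c.Extreme) ∧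
  (∀ v, IsInfiniteEmitter s v → ∃ c : GCycle s r, v ∈ c.verts) ∧
  (∀ α : ℕ → E, (∀ n, r (α n) = s (α (n + 1))) →
    {e : E | s e ∈ InfPathVerts s α ∧ r e ∉ Root s r (InfPathVerts s α)}.Finite)

/-!
Write `v ∈ H⊥⊥` as "every vertex reachable from `v` lies in `R(H)`". Under (a) and (b), vertices
on cycles and infinite emitters are recurrent (whatever they reach reaches them back), so they
belong to every hereditary `H` with `v ∈ R(H)`.

Necessity: a failure of (a), (b) or (c) yields a nonempty `W` (the vertices of a non-extreme cycle
with an exit, a single infinite emitter on no cycle, the vertices of a bad infinite path) with `W⊥`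
saturated and `W ⊆ R(W⊥)`. Then `W⊥⊥⊥` is everything, so the admissible pair `(W⊥, ∅)` is not
reflexive.

Sufficiency: a breaking vertex of a hereditary `H` is a recurrent infinite emitter with an edge into
`H`, so there are none, and the condition on `S` is trivial. A vertex of `H⊥⊥ − H` is regular, so by
saturation it has an edge staying in `H⊥⊥ − H`; walking greedily towards `H` produces an infinite
path in `H⊥⊥ − H` which never repeats a vertex (a repetition would close a cycle) and which infinitely
often passes a vertex with an edge into `H`. These edges contradict (c).
-/

open Filter

def IsRecurrent (s r : E → V) (v : V) : Prop :=
  ∀ w, Reach s r v w → Reach s r w v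

section Root

variable {s r : E → V} {H W : Set V} {v w : V}

lemma reach_edge (e : E) : Reach s r (s e) (r e) :=
  Relation.ReflTransGen.single ⟨e, rfl, rfl⟩

lemma mem_root_of_mem (h : v ∈ W) : v ∈ Root s r W :=
  ⟨v, h, .refl⟩

lemma mem_root_of_reach (h : Reach s r v w) (hw : w ∈ Root s r W) : v ∈ Root s r W :=
  let ⟨x, hx, hwx⟩ := hw
  ⟨x, hx, h.trans hwx⟩

lemma perp_hereditary (W : Set V) : Hereditary s r (perp s r W) :=
  fun _ _ hu huv hv => hu (mem_root_of_reach huv hv)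

lemma mem_perp_perp_iff : v ∈ perp s r (perp s r H) ↔ ∀ w, Reach s r v w → w ∈ Root s r H := by
  refine ⟨fun h w hw => by_contra fun hc => h ⟨w, hc, hw⟩, ?_⟩
  rintro h ⟨w, hw, hvw⟩
  exact hw (h w hvw)

lemma subset_perp_perp (hH : Hereditary s r H) : H ⊆ perp s r (perp s r H) :=
  fun v hv => mem_perp_perp_iff.2 fun w hvw => mem_root_of_mem (hH v w hv hvw)

lemma perp_saturated (hW : ∀ v ∈ W, IsRegular s v → ∃ e, s e = v ∧ r e ∈ Root s r W) :
    Saturated s r (perp s r W) := by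
  rintro v hreg hall ⟨w, hw, hvw⟩
  rcases hvw.cases_head with rfl | ⟨x, ⟨e, he, rfl⟩, hx⟩
  · obtain ⟨e, he, hre⟩ := hW v hw hreg
    exact hall e he hre
  · exact hall e he ⟨w, hw, hx⟩

lemma perp_perp_perp_eq_univ (hW : W ⊆ Root s r (perp s r W)) :
    perp s r (perp s r (perp s r W)) = Set.univ := by
  refine Set.eq_univ_of_forall fun v => mem_perp_perp_iff.2 fun w _ => ?_
  by_cases hw : w ∈ Root s r W
  · obtain ⟨x, hx, hwx⟩ := hw
    exact mem_root_of_reach hwx (hW hx)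
  · exact mem_root_of_mem hw

lemma eq_empty_of_reflexive
    (hrefl : ∀ H, Hereditary s r H → Saturated s r H → H = perp s r (perp s r H))
    (hsat : Saturated s r (perp s r W)) (hW : W ⊆ Root s r (perp s r W)) : W = ∅ := by
  have h := hrefl _ (perp_hereditary W) hsat
  rw [perp_perp_perp_eq_univ hW] at h
  refine Set.eq_empty_of_forall_notMem fun w hw => ?_
  have hw' : w ∈ perp s r W := h ▸ Set.mem_univ w
  exact hw' (mem_root_of_mem hw)

lemma IsRecurrent.mem_of_mem_root (hv : IsRecurrent s r v) (hH : Hereditary s r H)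
    (hvH : v ∈ Root s r H) : v ∈ H :=
  let ⟨w, hw, hvw⟩ := hvH
  hH w v hw (hv w hvw)

lemma breaking_eq_empty (hrec : ∀ v, IsInfiniteEmitter s v → IsRecurrent s r v)
    (hH : Hereditary s r H) : Breaking s r H = ∅ := by
  refine Set.eq_empty_of_forall_notMem ?_
  rintro v ⟨hvH, hinf, -, hfin⟩
  obtain ⟨e, rfl, he⟩ := (hinf.sdiff hfin).nonempty
  have hre : r e ∈ H := by_contra fun h => he ⟨rfl, h⟩
  exact hvH ((hrec _ hinf).mem_of_mem_root hH ⟨r e, hre, reach_edge e⟩)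

end Root

def Walk (s r : E → V) (a b : V) : List E → Prop
  | [] => a = b
  | e :: l => s e = a ∧ Walk s r (r e) b l

section Walk

variable {s r : E → V}

lemma reach_iff_exists_walk {a b : V} : Reach s r a b ↔ ∃ l, Walk s r a b l := by
  constructor
  · intro h
    induction h using Relation.ReflTransGen.head_induction_on with
    | refl => exact ⟨[], rfl⟩
    | head hab _ ih =>
      obtain ⟨e, rfl, rfl⟩ := hab
      obtain ⟨l, hl⟩ := ih
      exact ⟨e :: l, rfl, hl⟩
  · rintro ⟨l, hl⟩
    induction l generalizing a with
    | nil => exact hl ▸ .refl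
    | cons e l ih => exact .head ⟨e, hl.1, rfl⟩ (ih hl.2)

lemma walk_append {a b : V} {l₁ l₂ : List E} :
    Walk s r a b (l₁ ++ l₂) ↔ ∃ x, Walk s r a x l₁ ∧ Walk s r x b l₂ := by
  induction l₁ generalizing a with
  | nil => exact ⟨fun h => ⟨a, rfl, h⟩, fun ⟨_, hx, h⟩ => hx ▸ h⟩
  | cons e l ih =>
    exact ⟨fun ⟨he, h⟩ => let ⟨x, h₁, h₂⟩ := ih.1 h; ⟨x, ⟨he, h₁⟩, h₂⟩,
      fun ⟨x, ⟨he, h₁⟩, h₂⟩ => ⟨he, ih.2 ⟨x, h₁, h₂⟩⟩⟩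

lemma walk_iff_chain : ∀ {a b : V} {l : List E} (hne : l ≠ []),
    Walk s r a b l ↔
      s (l.head hne) = a ∧ r (l.getLast hne) = b ∧ l.IsChain (fun e f => r e = s f)
  | _, _, [e], _ => by simp [Walk]
  | a, b, e :: f :: l, _ => by
    change s e = a ∧ Walk s r (r e) b (f :: l) ↔ _
    rw [walk_iff_chain (List.cons_ne_nil f l)]
    simp only [List.head_cons, List.getLast_cons_cons, List.isChain_cons_cons]
    grind

lemma exists_split_of_not_nodup_map {α β : Type*} {f : α → β} :
    ∀ {l : List α}, ¬ (l.map f).Nodup →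
      ∃ l₁ x l₂ y l₃, l = l₁ ++ x :: l₂ ++ y :: l₃ ∧ f x = f y
  | [], h => absurd List.nodup_nil h
  | x :: l, h => by
    rw [List.map_cons, List.nodup_cons, not_and_or, not_not] at h
    rcases h with h | h
    · obtain ⟨y, hy, hxy⟩ := List.mem_map.1 h
      obtain ⟨l₂, l₃, rfl⟩ := List.mem_iff_append.1 hy
      exact ⟨[], x, l₂, y, l₃, rfl, hxy.symm⟩
    · obtain ⟨l₁, x', l₂, y, l₃, rfl, hxy⟩ := exists_split_of_not_nodup_map h
      exact ⟨x :: l₁, x', l₂, y, l₃, rfl, hxy⟩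

/-- A shortest closed walk through `v` repeats no source, so it is a cycle. -/
lemma exists_cycle_of_walk {v : V} {l : List E} (hne : l ≠ []) (hw : Walk s r v v l) :
    ∃ c : GCycle s r, v ∈ c.verts := by
  induction hn : l.length using Nat.strong_induction_on generalizing l with
  | _ n ih =>
  by_cases hnd : (l.map s).Nodup
  · obtain ⟨hhead, hlast, hchain⟩ := (walk_iff_chain hne).1 hw
    exact ⟨⟨l, hne, hchain, hlast.trans hhead.symm, hnd⟩, l.head hne, List.head_mem hne, hhead⟩
  · obtain ⟨l₁, e, l₂, f, l₃, rfl, hef⟩ := exists_split_of_not_nodup_map hnd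
    obtain ⟨x, hx, hf⟩ := walk_append.1 hw
    obtain ⟨y, hy, he⟩ := walk_append.1 hx
    have hf' : Walk s r y v (f :: l₃) := ⟨hef.symm.trans he.1, hf.2⟩
    refine ih _ ?_ (l := l₁ ++ f :: l₃) (by simp) (walk_append.2 ⟨y, hy, hf'⟩) rfl
    simp only [← hn, List.length_append, List.length_cons]
    omega

lemma exists_cycle_of_reach {e : E} (h : Reach s r (r e) (s e)) :
    ∃ c : GCycle s r, s e ∈ c.verts :=
  let ⟨l, hl⟩ := reach_iff_exists_walk.1 h
  exists_cycle_of_walk (List.cons_ne_nil e l) ⟨rfl, hl⟩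

end Walk

namespace GCycle

variable {s r : E → V} (c : GCycle s r) {v w : V}

lemma verts_nonempty : c.verts.Nonempty :=
  ⟨_, c.edges.head c.ne, List.head_mem c.ne, rfl⟩

lemma exists_walks_of_mem {e : E} (he : e ∈ c.edges) :
    ∃ l₁ l₂, c.edges = l₁ ++ e :: l₂ ∧ Walk s r (s (c.edges.head c.ne)) (s e) l₁ ∧
      Walk s r (r e) (s (c.edges.head c.ne)) l₂ := by
  have hw : Walk s r (s (c.edges.head c.ne)) (s (c.edges.head c.ne)) c.edges :=
    (walk_iff_chain c.ne).2 ⟨rfl, c.closed, c.chain⟩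
  generalize s (c.edges.head c.ne) = v₀ at hw ⊢
  obtain ⟨l₁, l₂, hsplit⟩ := List.mem_iff_append.1 he
  rw [hsplit] at hw
  obtain ⟨x, h₁, rfl, h₂⟩ := walk_append.1 hw
  exact ⟨l₁, l₂, hsplit, h₁, h₂⟩

lemma range_mem_verts {e : E} (he : e ∈ c.edges) : r e ∈ c.verts := by
  obtain ⟨l₁, l₂, hsplit, -, hw⟩ := c.exists_walks_of_mem he
  cases l₂ with
  | nil => exact ⟨_, List.head_mem c.ne, hw.symm⟩
  | cons f l => exact ⟨f, by simp [hsplit], hw.1⟩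

lemma reach_of_mem_verts (hv : v ∈ c.verts) (hw : w ∈ c.verts) : Reach s r v w := by
  obtain ⟨e, he, rfl⟩ := hv
  obtain ⟨f, hf, rfl⟩ := hw
  obtain ⟨-, l, -, -, hl⟩ := c.exists_walks_of_mem he
  obtain ⟨l', -, -, hl', -⟩ := c.exists_walks_of_mem hf
  exact (reach_edge e).trans (reach_iff_exists_walk.2 ⟨l ++ l', walk_append.2 ⟨_, hl, hl'⟩⟩)

lemma mem_verts_of_reach (hc : ¬ c.HasExit) (hv : v ∈ c.verts) (hvw : Reach s r v w) :
    w ∈ c.verts := by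
  induction hvw with
  | refl => exact hv
  | tail _ hxy ih =>
    obtain ⟨e, rfl, rfl⟩ := hxy
    exact c.range_mem_verts (by_contra fun he => hc ⟨e, ih, he⟩)

lemma isRecurrent (hc : ¬ c.HasExit ∨ c.Extreme) (hv : v ∈ c.verts) : IsRecurrent s r v := by
  intro w hvw
  rcases hc with hc | hc
  · exact c.reach_of_mem_verts (c.mem_verts_of_reach hc hv hvw) hv
  · obtain ⟨u, hu, hwu⟩ := hc.2 v hv w hvw
    exact hwu.trans (c.reach_of_mem_verts hu hv)

end GCycle

lemma isRecurrent_of_isInfiniteEmitter {s r : E → V}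
    (ha : ∀ c : GCycle s r, ¬ c.HasExit ∨ c.Extreme)
    (hb : ∀ v, IsInfiniteEmitter s v → ∃ c : GCycle s r, v ∈ c.verts)
    {v : V} (hv : IsInfiniteEmitter s v) : IsRecurrent s r v :=
  let ⟨c, hc⟩ := hb v hv
  c.isRecurrent (ha c) hc

section InfPath

variable {s r : E → V} {α : ℕ → E}

lemma reach_of_le (hα : ∀ n, r (α n) = s (α (n + 1))) {m n : ℕ} (h : m ≤ n) :
    Reach s r (s (α m)) (s (α n)) := by
  induction h with
  | refl => exact .refl
  | step _ ih => exact ih.tail ⟨_, rfl, hα _⟩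

lemma injective_of_forall_notMem_verts (hα : ∀ n, r (α n) = s (α (n + 1)))
    (h : ∀ n (c : GCycle s r), s (α n) ∉ c.verts) : Function.Injective fun n => s (α n) := by
  intro m n hmn
  by_contra hne
  wlog hlt : m < n generalizing m n
  · exact this hmn.symm (Ne.symm hne) (by omega)
  have hback : Reach s r (r (α m)) (s (α m)) := by
    rw [hα m, show s (α m) = s (α n) from hmn]
    exact reach_of_le hα hlt
  obtain ⟨c, hc⟩ := exists_cycle_of_reach hback
  exact h m c hc

lemma exists_infPath_frequently_mem {M T : Set V} {d : V → ℕ}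
    (hstep : ∀ v ∈ M, ∃ e, s e = v ∧ r e ∈ M ∧ (v ∉ T → d (r e) < d v)) {u : V} (hu : u ∈ M) :
    ∃ α : ℕ → E, (∀ n, r (α n) = s (α (n + 1))) ∧ (∀ n, s (α n) ∈ M) ∧
      ∃ᶠ n in atTop, s (α n) ∈ T := by
  choose g hgs hgM hgd using fun v : M => hstep v v.2
  let x : ℕ → M := fun n => Nat.rec ⟨u, hu⟩ (fun _ v => ⟨r (g v), hgM v⟩) n
  refine ⟨fun n => g (x n), fun n => (hgs (x (n + 1))).symm, fun n => (hgs (x n)).symm ▸ (x n).2,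
    ?_⟩
  suffices h : ∀ k n, d (x n).1 = k → ∃ m ≥ n, (x m).1 ∈ T by
    refine frequently_atTop.2 fun n => ?_
    obtain ⟨m, hm, hT⟩ := h _ n rfl
    exact ⟨m, hm, (hgs (x m)).symm ▸ hT⟩
  intro k
  induction k using Nat.strong_induction_on with
  | _ k ih =>
  intro n hn
  by_cases hT : (x n).1 ∈ T
  · exact ⟨n, le_rfl, hT⟩
  · obtain ⟨m, hm, hmT⟩ := ih _ (hn ▸ hgd (x n) hT) (n + 1) rfl
    exact ⟨m, by omega, hmT⟩

end InfPath

def ReachesIn (s r : E → V) (H : Set V) : ℕ → V → Prop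
  | 0, v => v ∈ H
  | n + 1, v => ∃ e, s e = v ∧ ReachesIn s r H n (r e)

/-- Junk value `0` when `v ∉ R(H)`. -/
noncomputable def distTo (s r : E → V) (H : Set V) (v : V) : ℕ :=
  sInf {n | ReachesIn s r H n v}

section Dist

variable {s r : E → V} {H : Set V} {v : V}

lemma exists_reachesIn_of_mem_root (h : v ∈ Root s r H) : ∃ n, ReachesIn s r H n v := by
  obtain ⟨w, hw, hvw⟩ := h
  induction hvw using Relation.ReflTransGen.head_induction_on with
  | refl => exact ⟨0, hw⟩
  | head hab _ ih =>
    obtain ⟨e, rfl, rfl⟩ := hab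
    obtain ⟨n, hn⟩ := ih
    exact ⟨n + 1, e, rfl, hn⟩

lemma exists_edge_distTo_lt (hv : v ∈ Root s r H) (hvH : v ∉ H)
    (hedge : ∀ e, s e = v → r e ∉ H) :
    ∃ e, s e = v ∧ r e ∉ H ∧ distTo s r H (r e) < distTo s r H v := by
  have hmem : ReachesIn s r H (distTo s r H v) v := Nat.sInf_mem (exists_reachesIn_of_mem_root hv)
  obtain ⟨k, hk⟩ : ∃ k, distTo s r H v = k + 1 :=
    Nat.exists_eq_succ_of_ne_zero fun h0 => hvH (by rwa [h0] at hmem)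
  rw [hk] at hmem
  obtain ⟨e, he, hek⟩ := hmem
  exact ⟨e, he, hedge e he, hk ▸ Nat.lt_succ_of_le (Nat.sInf_le hek)⟩

end Dist

section Characterization

variable {s r : E → V}

lemma perp_perp_subset (hE : AllReflexiveGraph s r) {H : Set V} (hH : Hereditary s r H)
    (hS : Saturated s r H) : perp s r (perp s r H) ⊆ H := by
  obtain ⟨ha, hb, hc⟩ := hE
  intro u hu
  by_contra huH
  set M := perp s r (perp s r H) \ H
  set T := {v | ∃ e, s e = v ∧ r e ∈ H}
  have hroot : ∀ v ∈ M, v ∈ Root s r H := fun v hv => mem_perp_perp_iff.1 hv.1 v .refl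
  have hstay : ∀ v ∈ M, ∀ e, s e = v → r e ∉ H → r e ∈ M := fun v hv e he hre =>
    ⟨perp_hereditary _ v (r e) hv.1 (he ▸ reach_edge e), hre⟩
  have hstep : ∀ v ∈ M, ∃ e, s e = v ∧ r e ∈ M ∧
      (v ∉ T → distTo s r H (r e) < distTo s r H v) := by
    intro v hv
    by_cases hvT : v ∈ T
    · obtain ⟨e₀, he₀, hre₀⟩ := hvT
      have hreg : IsRegular s v := ⟨fun h => h e₀ he₀, fun hinf =>
        hv.2 ((isRecurrent_of_isInfiniteEmitter ha hb hinf).mem_of_mem_root hH (hroot v hv))⟩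
      obtain ⟨e, he, hre⟩ : ∃ e, s e = v ∧ r e ∉ H := by
        by_contra! h
        exact hv.2 (hS v hreg h)
      exact ⟨e, he, hstay v hv e he hre, fun h => absurd ⟨e₀, he₀, hre₀⟩ h⟩
    · obtain ⟨e, he, hre, hlt⟩ := exists_edge_distTo_lt (hroot v hv) hv.2
        fun e he hre => hvT ⟨e, he, hre⟩
      exact ⟨e, he, hstay v hv e he hre, fun _ => hlt⟩
  obtain ⟨α, hα, hαM, hαT⟩ := exists_infPath_frequently_mem hstep ⟨hu, huH⟩
  have hinj : Function.Injective fun n => s (α n) :=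
    injective_of_forall_notMem_verts hα fun n c hc =>
      (hαM n).2 ((c.isRecurrent (ha c) hc).mem_of_mem_root hH (hroot _ (hαM n)))
  have hexits : (fun n => s (α n)) '' {n | s (α n) ∈ T} ⊆
      s '' {e | s e ∈ InfPathVerts s α ∧ r e ∉ Root s r (InfPathVerts s α)} := by
    rintro _ ⟨n, ⟨e, he, hre⟩, rfl⟩
    exact ⟨e, ⟨⟨n, he.symm⟩, fun ⟨_, ⟨k, rfl⟩, hk⟩ => (hαM k).2 (hH _ _ hre hk)⟩, he⟩
  exact ((Nat.frequently_atTop_iff_infinite.1 hαT).image hinj.injOn)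
    (((hc α hα).image s).subset hexits)

lemma not_hasExit_or_extreme_of_reflexive
    (hrefl : ∀ H, Hereditary s r H → Saturated s r H → H = perp s r (perp s r H))
    (c : GCycle s r) : ¬ c.HasExit ∨ c.Extreme := by
  refine or_iff_not_imp_left.2 fun hex => ⟨not_not.1 hex, ?_⟩
  by_contra! h
  obtain ⟨v, hv, w, hvw, hw⟩ := h
  have hsat : Saturated s r (perp s r c.verts) := perp_saturated fun _ ⟨e, he, hev⟩ _ =>
    ⟨e, hev, mem_root_of_mem (c.range_mem_verts he)⟩
  have hwperp : w ∈ perp s r c.verts := fun ⟨u, hu, hwu⟩ => hw u hu hwu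
  exact c.verts_nonempty.ne_empty (eq_empty_of_reflexive hrefl hsat fun x hx =>
    ⟨w, hwperp, (c.reach_of_mem_verts hx hv).trans hvw⟩)

lemma exists_cycle_of_reflexive
    (hrefl : ∀ H, Hereditary s r H → Saturated s r H → H = perp s r (perp s r H))
    {v : V} (hv : IsInfiniteEmitter s v) : ∃ c : GCycle s r, v ∈ c.verts := by
  by_contra! hno
  obtain ⟨e, rfl⟩ := hv.nonempty
  have hsat : Saturated s r (perp s r {s e}) :=
    perp_saturated fun _ hx hreg => (hreg.2 (hx ▸ hv)).elim
  have hre : r e ∈ perp s r {s e} := by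
    rintro ⟨_, rfl, hx⟩
    obtain ⟨c, hc⟩ := exists_cycle_of_reach hx
    exact hno c hc
  exact Set.singleton_ne_empty _ (eq_empty_of_reflexive hrefl hsat
    (Set.singleton_subset_iff.2 ⟨r e, hre, reach_edge e⟩))

lemma finite_exits_of_reflexive
    (hrefl : ∀ H, Hereditary s r H → Saturated s r H → H = perp s r (perp s r H))
    (hrec : ∀ v, IsInfiniteEmitter s v → IsRecurrent s r v) {α : ℕ → E}
    (hα : ∀ n, r (α n) = s (α (n + 1))) :
    {e : E | s e ∈ InfPathVerts s α ∧ r e ∉ Root s r (InfPathVerts s α)}.Finite := by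
  set A := InfPathVerts s α
  set F := {e : E | s e ∈ A ∧ r e ∉ Root s r A}
  by_contra hF
  have hfiber : ∀ v ∈ s '' F, (s ⁻¹' {v}).Finite := by
    rintro _ ⟨e, ⟨heA, he⟩, rfl⟩
    by_contra hinf
    exact he ⟨s e, heA, hrec _ hinf _ (reach_edge e)⟩
  have hU : (s '' F).Infinite := fun hfin =>
    hF ((hfin.preimage' hfiber).subset (Set.subset_preimage_image s F))
  have hsat : Saturated s r (perp s r A) := perp_saturated fun _ ⟨n, hn⟩ _ =>
    ⟨α n, hn, mem_root_of_mem ⟨n + 1, (hα n).symm⟩⟩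
  have hA : A ⊆ Root s r (perp s r A) := by
    rintro _ ⟨k, rfl⟩
    obtain ⟨m, hkm, e, ⟨-, he⟩, hem⟩ : ∃ m ≥ k, s (α m) ∈ s '' F := by
      by_contra! h
      refine hU (((Set.finite_Iio k).image fun n => s (α n)).subset ?_)
      rintro _ ⟨e, ⟨⟨n, hn⟩, he⟩, rfl⟩
      exact ⟨n, not_le.1 fun hkn => h n hkn ⟨e, ⟨⟨n, hn⟩, he⟩, hn.symm⟩, hn⟩
    exact ⟨r e, he, (reach_of_le hα hkm).trans (hem ▸ reach_edge e)⟩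
  have h0 : s (α 0) ∈ A := ⟨0, rfl⟩
  exact (Set.nonempty_of_mem h0).ne_empty (eq_empty_of_reflexive hrefl hsat hA)

end Characterization

/-- Every admissible pair of `E` is reflexive iff `E` satisfies: (a) each cycle
is without exits or extreme, (b) each infinite emitter is on a cycle, and
(c) each infinite path has only finitely many bifurcations with ranges outside
the root of its vertex set. -/
theorem all_reflexive_characterization (s r : E → V) :
    (∀ H S : Set V, Admissible s r H S →
        H = perp s r (perp s r H) ∧
          S = Sperp s r (perp s r H) (Sperp s r H S)) ↔
      AllReflexiveGraph s r := by
  constructor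
  · intro h
    have hrefl : ∀ H, Hereditary s r H → Saturated s r H → H = perp s r (perp s r H) :=
      fun H hH hS => (h H ∅ ⟨hH, hS, Set.empty_subset _⟩).1
    have ha := not_hasExit_or_extreme_of_reflexive hrefl
    have hb : ∀ v, IsInfiniteEmitter s v → ∃ c : GCycle s r, v ∈ c.verts :=
      fun _ => exists_cycle_of_reflexive hrefl
    exact ⟨ha, hb, fun α => finite_exits_of_reflexive hrefl
      (fun v => isRecurrent_of_isInfiniteEmitter ha hb)⟩
  · rintro hE H S ⟨hH, hS, hSB⟩
    have hbreak : ∀ H, Hereditary s r H → Breaking s r H = ∅ := fun _ =>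
      breaking_eq_empty fun _ => isRecurrent_of_isInfiniteEmitter hE.1 hE.2.1
    refine ⟨(subset_perp_perp hH).antisymm (perp_perp_subset hE hH hS), ?_⟩
    rw [Set.subset_empty_iff.1 (hSB.trans (hbreak H hH).subset), Sperp,
      hbreak _ (perp_hereditary _), Set.empty_sdiff]

end GraphAnn
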